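/- arXiv:1508.01260 — 2 statements merged into one kernel-verified Lean document; each statement's English description precedes it below -/
import Mathlib

section
/- The 2-variable weighted shift (T₁, T₂) with weights w_{I,j} = 1/2 if I = (0,0) and w_{I,j} = 1 otherwise does not coextend to a pair of doubly commuting isometries; that is, (T₁*, T₂*) is not the restriction of the adjoints of any pair of doubly commuting isometries to a co-invariant subspace. -/
open ContinuousLinearMap
open scoped InnerProductSpace ComplexConjugate

/-!
For doubly commuting isometries, `V₂*` commutes with the defect projection `1 - V₁V₁*`
and is a contraction, so `‖V₂* u‖² - ‖V₁* V₂* u‖² ≤ ‖u‖² - ‖V₁* u‖²` for every `u`.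
A coextension turns this into the same inequality for `T₁*, T₂*`. At `u = e(1,1)` the
left side is `1 - 1/4`, because of the weight `1/2` at the origin, while the right side
is `1 - 1 = 0`.
-/

section Isometry

variable {K : Type*} [NormedAddCommGroup K] [InnerProductSpace ℂ K] [CompleteSpace K]

lemma norm_adjoint_apply_le_of_norm_map_le (V : K →L[ℂ] K) (hV : ∀ x, ‖V x‖ ≤ ‖x‖)
    (y : K) : ‖adjoint V y‖ ≤ ‖y‖ :=
  calc ‖adjoint V y‖ ≤ ‖adjoint V‖ * ‖y‖ := (adjoint V).le_opNorm y
    _ = ‖V‖ * ‖y‖ := by rw [LinearIsometryEquiv.norm_map]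
    _ ≤ 1 * ‖y‖ := by gcongr; exact opNorm_le_bound V zero_le_one (by simpa using hV)
    _ = ‖y‖ := one_mul _

/-- `V V*` is the orthogonal projection onto the range of `V`. -/
lemma norm_sub_apply_adjoint_sq (V : K →L[ℂ] K) (hV : ∀ x, ‖V x‖ = ‖x‖) (u : K) :
    ‖u - V (adjoint V u)‖ ^ 2 = ‖u‖ ^ 2 - ‖adjoint V u‖ ^ 2 := by
  have hinner : RCLike.re ⟪u, V (adjoint V u)⟫_ℂ = ‖adjoint V u‖ ^ 2 := by
    rw [← adjoint_inner_left, inner_self_eq_norm_sq]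
  rw [@norm_sub_sq ℂ, hinner, hV]
  ring

lemma norm_adjoint_sq_sub_le_of_doublyCommuting (V₁ V₂ : K →L[ℂ] K)
    (hV₁ : ∀ x, ‖V₁ x‖ = ‖x‖) (hV₂ : ∀ x, ‖V₂ x‖ ≤ ‖x‖)
    (hcomm : V₁ ∘L V₂ = V₂ ∘L V₁)
    (hdcomm : adjoint V₁ ∘L V₂ = V₂ ∘L adjoint V₁) (u : K) :
    ‖adjoint V₂ u‖ ^ 2 - ‖adjoint V₁ (adjoint V₂ u)‖ ^ 2
      ≤ ‖u‖ ^ 2 - ‖adjoint V₁ u‖ ^ 2 := by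
  have hcomm' : adjoint V₂ (adjoint V₁ u) = adjoint V₁ (adjoint V₂ u) := by
    simpa using congr($(congrArg adjoint hcomm) u)
  have hdcomm' : adjoint V₂ (V₁ (adjoint V₁ u)) = V₁ (adjoint V₂ (adjoint V₁ u)) := by
    simpa using congr($(congrArg adjoint hdcomm) (adjoint V₁ u))
  have hdefect : adjoint V₂ (u - V₁ (adjoint V₁ u))
      = adjoint V₂ u - V₁ (adjoint V₁ (adjoint V₂ u)) := by
    rw [map_sub, hdcomm', hcomm']
  rw [← norm_sub_apply_adjoint_sq V₁ hV₁, ← norm_sub_apply_adjoint_sq V₁ hV₁,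
    ← hdefect]
  gcongr
  exact norm_adjoint_apply_le_of_norm_map_le V₂ hV₂ _

end Isometry

section WeightedShift

variable {ι : Type*} [DecidableEq ι]

lemma lp.inner_single_one_left (f : lp (fun _ : ι => ℂ) 2) (I : ι) :
    ⟪lp.single 2 I (1 : ℂ), f⟫_ℂ = f I := by
  simp [lp.inner_single_left]

lemma adjoint_apply_single_of_apply_single
    (A : lp (fun _ : ι => ℂ) 2 →L[ℂ] lp (fun _ : ι => ℂ) 2) (σ : ι → ι) (hσ : σ.Injective)
    (w : ι → ℂ) (hA : ∀ I, A (lp.single 2 I 1) = w I • lp.single 2 (σ I) 1) (I : ι) :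
    adjoint A (lp.single 2 (σ I) 1) = conj (w I) • lp.single 2 I 1 := by
  ext J
  rw [← lp.inner_single_one_left, adjoint_inner_right, hA, inner_smul_left,
    lp.inner_single_one_left]
  by_cases h : J = I
  · simp [h]
  · simp [lp.single_apply, h, hσ.ne h]

end WeightedShift

/-- The 2-variable weighted shift `(T₁, T₂)` on `ℓ²(ℕ²)` with weights
`w_{I,j} = 1/2` for `I = (0,0)` and `1` otherwise does not coextend to a pair of doubly
commuting isometries: there is no Hilbert space `K`, isometric embedding `J : H → K`
and doubly commuting isometries `(V₁, V₂)` on `K` such that `J H` is co-invariant and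
`Tⱼ` is the compression of `Vⱼ` (equivalently, `Vⱼ* ∘ J = J ∘ Tⱼ*`). -/
theorem two_variable_weighted_shift_no_doubly_commuting_coextension
    (e : ℕ × ℕ → lp (fun _ : ℕ × ℕ => ℂ) 2)
    (he : ∀ I, e I = lp.single 2 I (1 : ℂ))
    (T₁ T₂ : lp (fun _ : ℕ × ℕ => ℂ) 2 →L[ℂ] lp (fun _ : ℕ × ℕ => ℂ) 2)
    (hT₁ : ∀ I : ℕ × ℕ,
      T₁ (e I) = (if I = (0, 0) then (1 / 2 : ℂ) else 1) • e (I.1 + 1, I.2))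
    (hT₂ : ∀ I : ℕ × ℕ,
      T₂ (e I) = (if I = (0, 0) then (1 / 2 : ℂ) else 1) • e (I.1, I.2 + 1))
    (K : Type*) [NormedAddCommGroup K] [InnerProductSpace ℂ K] [CompleteSpace K]
    (J : lp (fun _ : ℕ × ℕ => ℂ) 2 →ₗᵢ[ℂ] K)
    (V₁ V₂ : K →L[ℂ] K)
    (hV₁ : ∀ x, ‖V₁ x‖ = ‖x‖) (hV₂ : ∀ x, ‖V₂ x‖ = ‖x‖)
    (hcomm : V₁ ∘L V₂ = V₂ ∘L V₁)
    (hdcomm : adjoint V₁ ∘L V₂ = V₂ ∘L adjoint V₁)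
    (hcoext₁ : ∀ x, adjoint V₁ (J x) = J (adjoint T₁ x))
    (hcoext₂ : ∀ x, adjoint V₂ (J x) = J (adjoint T₂ x)) :
    False := by
  have hadj₁ := adjoint_apply_single_of_apply_single T₁ (fun I => (I.1 + 1, I.2))
    (fun I I' h => by simpa [Prod.ext_iff] using h) _ (fun I => by simpa only [he] using hT₁ I)
  have hadj₂ := adjoint_apply_single_of_apply_single T₂ (fun I => (I.1, I.2 + 1))
    (fun I I' h => by simpa [Prod.ext_iff] using h) _ (fun I => by simpa only [he] using hT₂ I)
  have h₁ : adjoint T₁ (e (1, 1)) = e (0, 1) := by simpa [he] using hadj₁ (0, 1)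
  have h₂ : adjoint T₂ (e (1, 1)) = e (1, 0) := by simpa [he] using hadj₂ (1, 0)
  have h₁₂ : adjoint T₁ (e (1, 0)) = (1 / 2 : ℂ) • e (0, 0) := by
    simpa [he, map_ofNat] using hadj₁ (0, 0)
  have key := norm_adjoint_sq_sub_le_of_doublyCommuting V₁ V₂ hV₁ (fun x => (hV₂ x).le)
    hcomm hdcomm (J (e (1, 1)))
  rw [hcoext₂, h₂, hcoext₁, h₁₂, hcoext₁, h₁] at key
  norm_num [he, norm_smul, lp.norm_single] at key
end

section
/- Let X be the closure in ℂ^{|𝓘|} of the set of commuting families (w_{I,j})_{(I,j) ∈ 𝓘} with 0 < |w_{I,j}| ≤ 1, where 𝓘 = {(I,j) : I ∈ ℕ^d, |I| ≤ N, 1 ≤ j ≤ d}, and let X₀ = {(w_{I,j}) ∈ X : |w_{I,j}| = 1 for all (I,j)}. Then for every function f analytic in a neighborhood of X, sup_{w ∈ X} |f(w)| = sup_{w ∈ X₀} |f(w)|; i.e., the Shilov boundary of X is contained in X₀. -/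
/-- The finite coordinate space `ℂ^𝓘`, where `𝓘` indexes pairs `(I, j)` with `I ∈ ℕ^d`,
`|I| ≤ N`, `1 ≤ j ≤ d`; multi-indices with `|I| ≤ N` have all coordinates `≤ N`, so they
are encoded as elements of `Fin d → Fin (N+1)`. -/
abbrev WeightIndex (d N : ℕ) := (Fin d → Fin (N + 1)) × Fin d

/-- Restriction of a full weight family to the coordinates `(I, j)` with `|I| ≤ N`
(coordinates of the encoding not corresponding to such a pair are set to `0`). -/
noncomputable def restrictWeights (d N : ℕ) (w : (Fin d → ℕ) → Fin d → ℂ) :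
    WeightIndex d N → ℂ :=
  fun p => if (∑ i, (p.1 i : ℕ)) ≤ N then w (fun i => (p.1 i : ℕ)) p.2 else 0

/-- `X`: the closure of the set of commuting families `(w_{I,j})_{|I| ≤ N}` with
`0 < |w_{I,j}| ≤ 1`. -/
noncomputable def weightDomain (d N : ℕ) : Set (WeightIndex d N → ℂ) :=
  closure (restrictWeights d N ''
    {w : (Fin d → ℕ) → Fin d → ℂ |
      (∀ (I : Fin d → ℕ) (j : Fin d), (∑ i, I i) ≤ N →
        0 < ‖w I j‖ ∧ ‖w I j‖ ≤ 1) ∧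
      (∀ (I : Fin d → ℕ) (j k : Fin d), (∑ i, I i) + 1 ≤ N →
        w I j * w (I + Pi.single j 1) k = w I k * w (I + Pi.single k 1) j)})

/-- `X₀ ⊆ X`: the families all of whose entries are unimodular. -/
noncomputable def weightDomainUnimodular (d N : ℕ) : Set (WeightIndex d N → ℂ) :=
  {v ∈ weightDomain d N |
    ∀ p : WeightIndex d N, (∑ i, (p.1 i : ℕ)) ≤ N → ‖v p‖ = 1}

/-!
For a commuting family `w` with nonzero entries, deform each entry along
`z ↦ (w / |w|) · |w| ^ z`. Polar decomposition is multiplicative, so every `w(z)` is again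
commuting; for `Re z ≥ 0` its entries stay in the punctured unit disc, for `Re z = 0` they are
unimodular, and `w(1) = w`. Phragmén–Lindelöf for the bounded holomorphic function
`z ↦ f (w(z))` on the right half-plane bounds `|f w|` by its supremum on the imaginary axis,
hence by `sup_{X₀} |f|`; density of such `w` in `X` finishes the proof.
-/

open Complex

def commutingWeights (d N : ℕ) : Set ((Fin d → ℕ) → Fin d → ℂ) :=
  {w | (∀ (I : Fin d → ℕ) (j : Fin d), (∑ i, I i) ≤ N → 0 < ‖w I j‖ ∧ ‖w I j‖ ≤ 1) ∧
    (∀ (I : Fin d → ℕ) (j k : Fin d), (∑ i, I i) + 1 ≤ N →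
      w I j * w (I + Pi.single j 1) k = w I k * w (I + Pi.single k 1) j)}

lemma weightDomain_eq_closure (d N : ℕ) :
    weightDomain d N = closure (restrictWeights d N '' commutingWeights d N) := rfl

noncomputable def polarPath (a z : ℂ) : ℂ :=
  a / (‖a‖ : ℂ) * exp (z * (Real.log ‖a‖ : ℂ))

section polarPath

variable {a b : ℂ}

lemma norm_polarPath (ha : a ≠ 0) (z : ℂ) :
    ‖polarPath a z‖ = Real.exp (z.re * Real.log ‖a‖) := by
  rw [polarPath, norm_mul, norm_div, norm_real, norm_norm, div_self (norm_ne_zero_iff.2 ha),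
    one_mul, norm_exp, re_mul_ofReal]

lemma polarPath_mul (ha : a ≠ 0) (hb : b ≠ 0) (z : ℂ) :
    polarPath a z * polarPath b z = polarPath (a * b) z := by
  rw [polarPath, polarPath, polarPath, norm_mul,
    Real.log_mul (norm_ne_zero_iff.2 ha) (norm_ne_zero_iff.2 hb), ofReal_add, mul_add, exp_add,
    ofReal_mul]
  ring

lemma polarPath_one (ha : a ≠ 0) : polarPath a 1 = a := by
  have hnorm : (‖a‖ : ℂ) ≠ 0 := ofReal_ne_zero.2 (norm_ne_zero_iff.2 ha)
  rw [polarPath, one_mul, ← ofReal_exp, Real.exp_log (norm_pos_iff.2 ha),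
    div_mul_cancel₀ _ hnorm]

lemma differentiable_polarPath (a : ℂ) : Differentiable ℂ (polarPath a) :=
  ((differentiable_id.mul_const _).cexp).const_mul _

end polarPath

section commutingWeights

variable {d N : ℕ} {w : (Fin d → ℕ) → Fin d → ℂ}

lemma sum_add_single (I : Fin d → ℕ) (j : Fin d) :
    ∑ i, (I + Pi.single j 1 : Fin d → ℕ) i = (∑ i, I i) + 1 := by
  simp [Finset.sum_add_distrib]

lemma ne_zero_of_mem_commutingWeights (hw : w ∈ commutingWeights d N) {I : Fin d → ℕ}
    (j : Fin d) (hI : ∑ i, I i ≤ N) : w I j ≠ 0 :=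
  norm_pos_iff.1 (hw.1 I j hI).1

lemma polarPath_mem_commutingWeights (hw : w ∈ commutingWeights d N) {z : ℂ}
    (hz : 0 ≤ z.re) : (fun I j => polarPath (w I j) z) ∈ commutingWeights d N := by
  refine ⟨fun I j hI => ?_, fun I j k hI => ?_⟩
  · rw [norm_polarPath (ne_zero_of_mem_commutingWeights hw j hI)]
    exact ⟨Real.exp_pos _, Real.exp_le_one_iff.2 <|
      mul_nonpos_of_nonneg_of_nonpos hz (Real.log_nonpos (norm_nonneg _) (hw.1 I j hI).2)⟩
  · have hI' : ∑ i, I i ≤ N := by omega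
    have hne (l : Fin d) {J : Fin d → ℕ} (hJ : ∑ i, J i ≤ N) :=
      ne_zero_of_mem_commutingWeights hw l hJ
    rw [polarPath_mul (hne j hI') (hne k (by rwa [sum_add_single])),
      polarPath_mul (hne k hI') (hne j (by rwa [sum_add_single])), hw.2 I j k hI]

lemma norm_restrictWeights_le (hw : w ∈ commutingWeights d N) :
    ‖restrictWeights d N w‖ ≤ 1 := by
  refine (pi_norm_le_iff_of_nonneg zero_le_one).2 fun p => ?_
  unfold restrictWeights
  split_ifs with h
  · exact (hw.1 _ _ h).2
  · simp

lemma differentiable_restrictWeights {u : ℂ → (Fin d → ℕ) → Fin d → ℂ}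
    (hu : ∀ I j, Differentiable ℂ fun z => u z I j) :
    Differentiable ℂ fun z => restrictWeights d N (u z) := by
  refine differentiable_pi.2 fun p => ?_
  unfold restrictWeights
  split_ifs
  exacts [hu _ _, differentiable_const 0]

end commutingWeights

lemma isCompact_weightDomain (d N : ℕ) : IsCompact (weightDomain d N) := by
  rw [weightDomain_eq_closure]
  refine (isCompact_closedBall 0 1).of_isClosed_subset isClosed_closure ?_
  refine closure_minimal ?_ Metric.isClosed_closedBall
  rintro _ ⟨w, hw, rfl⟩
  simpa using norm_restrictWeights_le hw

lemma weightDomainUnimodular_subset (d N : ℕ) :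
    weightDomainUnimodular d N ⊆ weightDomain d N :=
  fun _ hv => hv.1

lemma one_mem_weightDomainUnimodular (d N : ℕ) :
    restrictWeights d N (fun _ _ => 1) ∈ weightDomainUnimodular d N :=
  ⟨subset_closure ⟨_, ⟨fun _ _ _ => by simp, fun _ _ _ _ => rfl⟩, rfl⟩,
    fun p hp => by simp [restrictWeights, hp]⟩

lemma norm_le_of_forall_re_nonneg {E : Type*} [NormedAddCommGroup E] [NormedSpace ℂ E]
    {g : ℂ → E} {M C : ℝ} (hd : ∀ z : ℂ, 0 ≤ z.re → DifferentiableAt ℂ g z)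
    (hM : ∀ z : ℂ, 0 ≤ z.re → ‖g z‖ ≤ M) (him : ∀ x : ℝ, ‖g (x * I)‖ ≤ C) {z : ℂ}
    (hz : 0 ≤ z.re) : ‖g z‖ ≤ C := by
  have hcont : DiffContOnCl ℂ g {z : ℂ | 0 < z.re} :=
    ⟨fun z hz => (hd z hz.le).differentiableWithinAt, by
      rw [closure_setOfPred_lt_re]
      exact fun z hz => (hd z hz).continuousAt.continuousWithinAt⟩
  refine PhragmenLindelof.right_half_plane_of_bounded_on_real hcont ⟨1, one_lt_two, 0, ?_⟩ ?_
    him hz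
  · refine Asymptotics.IsBigO.of_bound M (Filter.eventually_inf_principal.2 ?_)
    exact Filter.Eventually.of_forall fun z hz => by simpa using hM z (le_of_lt hz)
  · refine Filter.isBoundedUnder_of_eventually_le (a := M) ?_
    filter_upwards [Filter.eventually_ge_atTop 0] with x hx
    exact hM x (by simpa using hx)

lemma norm_apply_restrictWeights_le_sSup_unimodular {d N : ℕ} {V : Set (WeightIndex d N → ℂ)}
    {f : (WeightIndex d N → ℂ) → ℂ} (hXV : weightDomain d N ⊆ V) (hf : AnalyticOnNhd ℂ f V)
    (hbdd : BddAbove ((fun v => ‖f v‖) '' weightDomain d N))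
    {w : (Fin d → ℕ) → Fin d → ℂ} (hw : w ∈ commutingWeights d N) :
    ‖f (restrictWeights d N w)‖ ≤ sSup ((fun v => ‖f v‖) '' weightDomainUnimodular d N) := by
  set W : ℂ → WeightIndex d N → ℂ := fun z => restrictWeights d N fun I j => polarPath (w I j) z
  have hX (z : ℂ) (hz : 0 ≤ z.re) : W z ∈ weightDomain d N :=
    subset_closure ⟨_, polarPath_mem_commutingWeights hw hz, rfl⟩
  have hX₀ (x : ℝ) : W (x * I) ∈ weightDomainUnimodular d N := by
    refine ⟨hX _ (by simp), fun p hp => ?_⟩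
    simp only [W, restrictWeights, if_pos hp]
    simp [norm_polarPath (ne_zero_of_mem_commutingWeights hw _ hp)]
  have hW : Differentiable ℂ W :=
    differentiable_restrictWeights fun I j => differentiable_polarPath (w I j)
  have hW₁ : W 1 = restrictWeights d N w := by
    funext p
    simp only [W, restrictWeights]
    split_ifs with hp
    exacts [polarPath_one (ne_zero_of_mem_commutingWeights hw _ hp), rfl]
  rw [← hW₁]
  exact norm_le_of_forall_re_nonneg
    (fun z hz => (hf _ (hXV (hX z hz))).differentiableAt.comp z (hW z))
    (fun z hz => le_csSup hbdd ⟨_, hX z hz, rfl⟩)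
    (fun x => le_csSup (hbdd.mono (Set.image_mono (weightDomainUnimodular_subset d N)))
      ⟨_, hX₀ x, rfl⟩)
    zero_le_one

theorem shilov_boundary_of_weight_domain_general
    (d N : ℕ) (V : Set (WeightIndex d N → ℂ)) (f : (WeightIndex d N → ℂ) → ℂ)
    (hXV : weightDomain d N ⊆ V) (hf : AnalyticOnNhd ℂ f V) :
    sSup ((fun v => ‖f v‖) '' weightDomain d N)
      = sSup ((fun v => ‖f v‖) '' weightDomainUnimodular d N) := by
  have hF : ContinuousOn (fun v => ‖f v‖) (weightDomain d N) :=
    (hf.continuousOn.mono hXV).norm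
  have hbdd := (isCompact_weightDomain d N).bddAbove_image hF
  have hX₀ := one_mem_weightDomainUnimodular d N
  refine le_antisymm ?_ (csSup_le_csSup hbdd ⟨_, Set.mem_image_of_mem _ hX₀⟩
    (Set.image_mono (weightDomainUnimodular_subset d N)))
  refine csSup_le ⟨_, Set.mem_image_of_mem _ hX₀.1⟩ ?_
  rintro _ ⟨v, hv, rfl⟩
  rw [weightDomain_eq_closure] at hF hv
  refine ContinuousWithinAt.closure_le hv ((hF v hv).mono subset_closure)
    continuousWithinAt_const ?_
  rintro _ ⟨w, hw, rfl⟩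
  exact norm_apply_restrictWeights_le_sSup_unimodular hXV hf hbdd hw

/-- For every function `f` analytic in a neighbourhood of `X`,
`sup_X |f| = sup_{X₀} |f|`; that is, the Shilov boundary of `X` is contained in `X₀`. -/
theorem shilov_boundary_of_weight_domain
    (d N : ℕ) (V : Set (WeightIndex d N → ℂ)) (f : (WeightIndex d N → ℂ) → ℂ)
    (hV : IsOpen V) (hXV : weightDomain d N ⊆ V) (hf : AnalyticOnNhd ℂ f V) :
    sSup ((fun v => ‖f v‖) '' weightDomain d N)
      = sSup ((fun v => ‖f v‖) '' weightDomainUnimodular d N) :=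
  shilov_boundary_of_weight_domain_general d N V f hXV hf
end
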